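/- Let X be a finite indecomposable crossed set, let k_2 be the number of fixed points of φ_u other than u, and k_2' the number of points moved by φ_u (for any u ∈ X). Then k_2 ≤ (1/2) k_2' (k_2' − 2) and |X| ≤ (1/2) (k_2')^2 + 1. -/

import Mathlib

/-- A rack structure on a set `X`: a binary operation `act` such that each left
translation is bijective and `act` is self-distributive. -/
structure RackStr (X : Type*) where
  act : X → X → X
  bij : ∀ x, Function.Bijective (act x)
  self_distrib : ∀ x y z, act x (act y z) = act (act x y) (act x z)

namespace RackStr

variable {X : Type*}

/-- A quandle is a rack with `x ▷ x = x`. -/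
def IsQuandle (R : RackStr X) : Prop := ∀ x, R.act x x = x

/-- A crossed set is a quandle in which `x ▷ y = y ↔ y ▷ x = x`. -/
def IsCrossed (R : RackStr X) : Prop :=
  R.IsQuandle ∧ ∀ x y, R.act x y = y ↔ R.act y x = x

/-- The left translation `φ_x` as a permutation. -/
noncomputable def perm (R : RackStr X) (x : X) : Equiv.Perm X :=
  Equiv.ofBijective (R.act x) (R.bij x)

/-- A rack is indecomposable if its inner group (generated by the `φ_x`)
acts transitively. -/
def Indecomposable (R : RackStr X) : Prop :=
  ∀ x y : X, ∃ π ∈ Subgroup.closure (Set.range R.perm), π x = y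

end RackStr

/-!
Every element `π` of the inner group is a rack automorphism, so `φ_{π x} = π φ_x π⁻¹` and all
translations move the same number `k₂'` of points. Two distinct points `u ≠ v` always
have a common moved point: otherwise the orbit of `u` under the group generated by the `φ_w`
fixing `v` is stable under every `φ_x` (those not in that group fix it pointwise), so by
transitivity it contains `v`, which is absurd because that group fixes `v`.

Now double count the pairs `(y, m)` with `y` a fixed point of `φ_u` other than `u`, `m` moved by
`φ_u`, and `m` moved by `φ_y`. Since `φ_u` commutes with `φ_y`, it permutes the nonempty set of
common moved points without fixed points, so each `y` lies in at least two pairs. Each `m` lies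
in at most `k₂' - 2` pairs: such `y` are moved by `φ_m`, which also moves `u` and a common moved
point of `u` and `m`, neither of which is such a `y`.
-/

open Finset
open scoped Pointwise

namespace RackStr

variable {X : Type*} (R : RackStr X)

@[simp] lemma perm_apply (x y : X) : R.perm x y = R.act x y := rfl

def autGroup : Subgroup (Equiv.Perm X) where
  carrier := {π | ∀ x y, π (R.act x y) = R.act (π x) (π y)}
  mul_mem' {π σ} hπ hσ x y := by
    rw [Equiv.Perm.mul_apply, hσ x y, hπ]
    rfl
  one_mem' _ _ := rfl
  inv_mem' {π} hπ x y := π.injective <| by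
    rw [hπ]
    simp

lemma perm_mem_autGroup (x : X) : R.perm x ∈ R.autGroup :=
  R.self_distrib x

lemma closure_range_perm_le_autGroup : Subgroup.closure (Set.range R.perm) ≤ R.autGroup :=
  (Subgroup.closure_le _).2 <| Set.range_subset_iff.2 R.perm_mem_autGroup

variable {R}

lemma act_apply_eq_apply_iff {π : Equiv.Perm X} (hπ : π ∈ R.autGroup) (a b : X) :
    R.act (π a) (π b) = π b ↔ R.act a b = b := by
  rw [← hπ a b, π.injective.eq_iff]

lemma conj_perm_of_mem_autGroup {π : Equiv.Perm X} (hπ : π ∈ R.autGroup) (x : X) :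
    π * R.perm x * π⁻¹ = R.perm (π x) := by
  ext y
  simp [hπ x]

lemma act_apply_eq_apply_of_disjoint_perm (hc : R.IsCrossed) {u v : X}
    (huv : (R.perm u).Disjoint (R.perm v)) {ρ : Equiv.Perm X} (hρ : ρ ∈ R.autGroup)
    (hρv : ρ v = v) {x : X} (hx : R.act v x ≠ x) : R.act x (ρ u) = ρ u := by
  refine (hc.2 _ _).2 ?_
  obtain h | h := huv (ρ⁻¹ x)
  · simpa using (act_apply_eq_apply_iff hρ u (ρ⁻¹ x)).2 h
  · exact absurd (by simpa [hρv] using (act_apply_eq_apply_iff hρ v (ρ⁻¹ x)).2 h) hx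

lemma eq_of_disjoint_perm (hc : R.IsCrossed) (hind : R.Indecomposable) {u v : X}
    (huv : (R.perm u).Disjoint (R.perm v)) : u = v := by
  set L := Subgroup.closure (R.perm '' {w | R.act v w = w})
  have hLv : L ≤ MulAction.stabilizer (Equiv.Perm X) v :=
    (Subgroup.closure_le _).2 <| by rintro _ ⟨w, hw, rfl⟩; exact (hc.2 w v).2 hw
  have hLaut : L ≤ R.autGroup :=
    (Subgroup.closure_mono (Set.image_subset_range _ _)).trans R.closure_range_perm_le_autGroup
  set O : Set X := {z | ∃ ρ ∈ L, ρ u = z}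
  have hfix : ∀ x, R.act v x ≠ x → ∀ z ∈ O, R.act x z = z := by
    rintro x hx _ ⟨ρ, hρ, rfl⟩
    exact act_apply_eq_apply_of_disjoint_perm hc huv (hLaut hρ) (hLv hρ) hx
  have hO : Subgroup.closure (Set.range R.perm) ≤ MulAction.stabilizer (Equiv.Perm X) O := by
    refine (Subgroup.closure_le _).2 ?_
    rintro _ ⟨x, rfl⟩
    refine MulAction.mem_stabilizer_set.2 fun z => ?_
    by_cases hx : R.act v x = x
    · have hxL : R.perm x ∈ L := Subgroup.subset_closure ⟨x, hx, rfl⟩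
      constructor
      · rintro ⟨ρ, hρ, h⟩
        exact ⟨(R.perm x)⁻¹ * ρ, mul_mem (inv_mem hxL) hρ, by
          rw [Equiv.Perm.mul_apply, h, Equiv.Perm.smul_def]
          exact (R.perm x).symm_apply_apply z⟩
      · rintro ⟨ρ, hρ, rfl⟩
        exact ⟨R.perm x * ρ, mul_mem hxL hρ, rfl⟩
    · constructor
      · intro h
        rwa [← (R.bij x).1 (hfix x hx _ h)]
      · intro h
        simpa [hfix x hx z h] using h
  obtain ⟨π, hπ, rfl⟩ := hind u v
  obtain ⟨ρ, hρ, hρu⟩ : π u ∈ O := (MulAction.mem_stabilizer_set.1 (hO hπ) u).2 ⟨1, one_mem L, rfl⟩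
  exact ρ.injective (hρu.trans (hLv hρ).symm)

section Finite

variable [Fintype X] [DecidableEq X]

lemma IsCrossed.mem_support_perm_comm (hc : R.IsCrossed) {x y : X} :
    y ∈ (R.perm x).support ↔ x ∈ (R.perm y).support := by
  simp only [Equiv.Perm.mem_support, perm_apply]
  exact not_congr (hc.2 x y)

lemma support_perm_inter_nonempty (hc : R.IsCrossed) (hind : R.Indecomposable) {u v : X}
    (huv : u ≠ v) : ((R.perm u).support ∩ (R.perm v).support).Nonempty := by
  rw [← not_disjoint_iff_nonempty_inter, ← Equiv.Perm.disjoint_iff_disjoint_support]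
  exact fun h => huv (eq_of_disjoint_perm hc hind h)

lemma card_support_perm_eq (hind : R.Indecomposable) (u v : X) :
    #(R.perm u).support = #(R.perm v).support := by
  obtain ⟨π, hπ, rfl⟩ := hind u v
  rw [← conj_perm_of_mem_autGroup (R.closure_range_perm_le_autGroup hπ),
    Equiv.Perm.card_support_conj]

lemma card_eq_card_erase_compl_support_add (hq : R.IsQuandle) (u : X) :
    Fintype.card X = #((R.perm u).supportᶜ.erase u) + #(R.perm u).support + 1 := by
  have hu : u ∈ (R.perm u).supportᶜ := by simp [hq u]
  rw [add_right_comm, card_erase_add_one hu, card_compl_add_card]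

lemma two_le_card_support_inter (hc : R.IsCrossed) (hind : R.Indecomposable) {u y : X}
    (hyu : y ≠ u) (huy : R.act u y = y) :
    2 ≤ #((R.perm u).support ∩ (R.perm y).support) := by
  obtain ⟨m, hm⟩ := support_perm_inter_nonempty hc hind hyu.symm
  rw [mem_inter] at hm
  have hum : R.perm u m ∈ (R.perm u).support ∩ (R.perm y).support := by
    refine mem_inter.2 ⟨Equiv.Perm.apply_mem_support.2 hm.1, ?_⟩
    have h := (act_apply_eq_apply_iff (R.perm_mem_autGroup u) y m).not.2 (Equiv.Perm.mem_support.1 hm.2)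
    rw [perm_apply, huy] at h
    exact Equiv.Perm.mem_support.2 h
  exact one_lt_card.2 ⟨m, mem_inter.2 hm, _, hum, (Equiv.Perm.mem_support.1 hm.1).symm⟩

lemma card_filter_mem_support_le (hc : R.IsCrossed) (hind : R.Indecomposable) {u m : X}
    (hm : m ∈ (R.perm u).support) :
    #(((R.perm u).supportᶜ.erase u).filter (fun y => m ∈ (R.perm y).support)) ≤
      #(R.perm m).support - 2 := by
  have hmu : m ≠ u := by rintro rfl; exact Equiv.Perm.mem_support.1 hm (hc.1 m)
  obtain ⟨w, hw⟩ := support_perm_inter_nonempty hc hind hmu.symm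
  rw [mem_inter] at hw
  have hwu : w ≠ u := by rintro rfl; exact Equiv.Perm.mem_support.1 hw.1 (hc.1 w)
  have hu : u ∈ (R.perm m).support := hc.mem_support_perm_comm.1 hm
  have hsub : ((R.perm u).supportᶜ.erase u).filter (fun y => m ∈ (R.perm y).support) ⊆
      (((R.perm m).support.erase u).erase w) := by
    intro y hy
    simp only [mem_filter, mem_erase, mem_compl] at hy ⊢
    exact ⟨fun h => hy.1.2 (h ▸ hw.1), hy.1.1, hc.mem_support_perm_comm.2 hy.2⟩
  calc _ ≤ #(((R.perm m).support.erase u).erase w) := card_le_card hsub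
    _ = #(R.perm m).support - 2 := by
      rw [card_erase_of_mem (mem_erase.2 ⟨hwu, hw.2⟩), card_erase_of_mem hu]
      rfl

lemma card_erase_compl_support_mul_two_le (hc : R.IsCrossed) (hind : R.Indecomposable) (u : X) :
    #((R.perm u).supportᶜ.erase u) * 2 ≤ #(R.perm u).support * (#(R.perm u).support - 2) := by
  refine card_mul_le_card_mul (fun y m => m ∈ (R.perm y).support) (fun y hy => ?_) fun m hm => ?_
  · simp only [mem_erase, mem_compl, Equiv.Perm.mem_support, perm_apply, not_not] at hy
    rw [bipartiteAbove, filter_mem_eq_inter]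
    exact two_le_card_support_inter hc hind hy.1 hy.2
  · rw [card_support_perm_eq hind u m]
    exact card_filter_mem_support_le hc hind hm

lemma two_mul_card_erase_compl_support_add_le (hc : R.IsCrossed) (hind : R.Indecomposable)
    (u : X) :
    2 * #((R.perm u).supportᶜ.erase u) + 2 * #(R.perm u).support ≤ #(R.perm u).support ^ 2 := by
  have hcount := card_erase_compl_support_mul_two_le hc hind u
  have hne := (R.perm u).card_support_ne_one
  generalize #(R.perm u).support = k at hcount hne ⊢
  rcases k with _ | _ | n
  · simpa using hcount
  · exact absurd rfl hne
  · rw [show n + 1 + 1 - 2 = n by omega] at hcount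
    nlinarith

end Finite

end RackStr

/-- for a finite indecomposable crossed set,
`k2 ≤ (1/2) k2' (k2' − 2)` and `|X| ≤ (1/2) k2'^2 + 1`. -/
theorem size_of_racks_cor {X : Type*} [Fintype X] [DecidableEq X] (R : RackStr X)
    (hc : R.IsCrossed) (hind : R.Indecomposable) (u : X)
    (k2 k2' : ℕ)
    (hk2 : k2 = (Finset.univ.filter fun y : X => R.act u y = y ∧ y ≠ u).card)
    (hk2' : k2' = (Finset.univ.filter fun y : X => R.act u y ≠ y).card) :
    (k2 : ℚ) ≤ (1 / 2) * k2' * ((k2' : ℚ) - 2) ∧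
      (Fintype.card X : ℚ) ≤ (1 / 2) * (k2' : ℚ) ^ 2 + 1 := by
  have hS : (univ.filter fun y : X => R.act u y = y ∧ y ≠ u) = (R.perm u).supportᶜ.erase u := by
    ext y
    simp [and_comm]
  have hM : (univ.filter fun y : X => R.act u y ≠ y) = (R.perm u).support := rfl
  rw [hS] at hk2
  rw [hM] at hk2'
  have hcard := R.card_eq_card_erase_compl_support_add hc.1 u
  have hcount := R.two_mul_card_erase_compl_support_add_le hc hind u
  rw [← hk2, ← hk2'] at hcard hcount
  have hcountq : 2 * (k2 : ℚ) + 2 * k2' ≤ (k2' : ℚ) ^ 2 := by exact_mod_cast hcount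
  rw [hcard]
  push_cast
  constructor <;> linarith
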